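/- For any formal power series h(t) (over a characteristic-0 field), any r ≥ 1, and any polynomial p(x): ⟨h(t)^r | p(x)⟩ = L^{⊗r}( ((e^t-1)/t · h(t))^r p(x) ), where L^{⊗r} denotes applying the Bernoulli functional L(x^n) = B_n in r variables, i.e., composing with the r-fold substitution x = x_1 + ⋯ + x_r and applying L in each variable. In particular, for h(t) = 1, L^{⊗r}( ((e^t-1)/t)^r p(x) ) = p(0). -/

import Mathlib

open PowerSeries Finset

/-- The exponential series `e^{xt}`. -/
noncomputable def expS (x : ℚ) : PowerSeries ℚ :=
  PowerSeries.mk fun n => x ^ n / (n.factorial : ℚ)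

/-- Division by `t`. -/
noncomputable def divT (f : PowerSeries ℚ) : PowerSeries ℚ :=
  PowerSeries.mk fun n => PowerSeries.coeff (n + 1) f

/-- The umbral pairing `⟨f(t) | p(x)⟩`. -/
noncomputable def pair (f : PowerSeries ℚ) (p : Polynomial ℚ) : ℚ :=
  ∑ m ∈ Finset.range (p.natDegree + 1),
    p.coeff m * (m.factorial : ℚ) * PowerSeries.coeff m f

/-- The umbral action `f(t)p(x) = ∑ (a_m/m!) p^{(m)}(x)`. -/
noncomputable def act (f : PowerSeries ℚ) (p : Polynomial ℚ) : Polynomial ℚ :=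
  ∑ m ∈ Finset.range (p.natDegree + 1),
    PowerSeries.coeff m f • (Polynomial.derivative^[m] p)

/-- The `r`-fold Bernoulli functional `L^{⊗r}`: substitute `x = x₁ + ⋯ + x_r` and
apply `L(xᵢ^n) = B_n` in each variable; on a monomial `x^m` this gives
`∑_{m₁+⋯+m_r=m} (m choose m₁,…,m_r) B_{m₁}⋯B_{m_r}`. -/
noncomputable def Lr (r : ℕ) (p : Polynomial ℚ) : ℚ :=
  ∑ m ∈ Finset.range (p.natDegree + 1), p.coeff m *
    ∑ f ∈ Finset.Nat.antidiagonalTuple r m,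
      (Nat.multinomial Finset.univ f : ℚ) * ∏ i, bernoulli (f i)

/-!
Under the umbral pairing, the action of `g(t)` on polynomials is adjoint to multiplication by
`g(t)`: both `⟨f g | p⟩` and `⟨f | g p⟩` expand to `∑_{k+m=n} f_k g_m n! p_n`. The functional
`L^{⊗r}` is the pairing with `(t/(e^t-1))^r`, because its multinomial sum over
`m₁+⋯+m_r = n` is `n!` times the `n`-th coefficient of that power. Hence
`L^{⊗r}(((e^t-1)/t · h)^r p) = ⟨(t/(e^t-1))^r ((e^t-1)/t)^r h^r | p⟩ = ⟨h^r | p⟩`,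
and `h = 1` gives `⟨1 | p⟩ = p(0)`.
-/

theorem PowerSeries.coeff_pow_eq_sum_antidiagonalTuple {R : Type*} [CommSemiring R]
    (φ : R⟦X⟧) (r m : ℕ) :
    coeff m (φ ^ r) = ∑ f ∈ Nat.antidiagonalTuple r m, ∏ i, coeff (f i) φ := by
  classical
  rw [← Fin.prod_const, coeff_prod]
  refine sum_nbij' (⇑) Finsupp.equivFunOnFinite.symm ?_ ?_ ?_ ?_ ?_ <;>
    simp [Nat.mem_antidiagonalTuple]

lemma expS_one_eq_exp : expS 1 = exp ℚ := by
  ext n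
  simp [expS, coeff_exp, one_div]

lemma divT_mul_X {f : PowerSeries ℚ} (hf : constantCoeff f = 0) : divT f * X = f := by
  ext (_ | n)
  · simpa using hf.symm
  · simp [divT, coeff_succ_mul_X]

lemma bernoulliPowerSeries_mul_divT_exp_sub_one :
    bernoulliPowerSeries ℚ * divT (expS 1 - 1) = 1 := by
  refine mul_right_cancel₀ (X_ne_zero (R := ℚ)) ?_
  rw [one_mul, mul_assoc, divT_mul_X (by simp [expS]), expS_one_eq_exp,
    bernoulliPowerSeries_mul_exp_sub_one]

lemma pair_eq_sum_range (f : PowerSeries ℚ) {p : Polynomial ℚ} {N : ℕ} (hN : p.natDegree < N) :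
    pair f p = ∑ m ∈ range N, p.coeff m * m.factorial * coeff m f := by
  refine sum_subset (range_subset_range.mpr hN) fun m _ hm => ?_
  rw [Polynomial.coeff_eq_zero_of_natDegree_lt (by simpa using hm), zero_mul, zero_mul]

lemma pair_one (p : Polynomial ℚ) : pair 1 p = p.eval 0 := by
  rw [pair, sum_eq_single_of_mem 0 (by simp) fun m _ hm => by simp [coeff_one, hm]]
  simp [Polynomial.coeff_zero_eq_eval_zero]

lemma natDegree_act_le (g : PowerSeries ℚ) (p : Polynomial ℚ) :
    (act g p).natDegree ≤ p.natDegree :=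
  Polynomial.natDegree_sum_le_of_forall_le _ _ fun m _ =>
    (Polynomial.natDegree_smul_le _ _).trans
      ((Polynomial.natDegree_iterate_derivative p m).trans (Nat.sub_le _ _))

lemma coeff_act (g : PowerSeries ℚ) (p : Polynomial ℚ) (k : ℕ) :
    (act g p).coeff k = ∑ m ∈ range (p.natDegree + 1),
      coeff m g * ((k + m).descFactorial m * p.coeff (k + m)) := by
  simp only [act, Polynomial.finsetSum_coeff, Polynomial.coeff_smul,
    Polynomial.coeff_iterate_derivative, smul_eq_mul, nsmul_eq_mul]

lemma pair_mul (f g : PowerSeries ℚ) (p : Polynomial ℚ) :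
    pair (f * g) p = pair f (act g p) := by
  set N := p.natDegree + 1
  set F : ℕ → ℕ → ℚ := fun k m =>
    coeff k f * coeff m g * (k + m).factorial * p.coeff (k + m)
  have hF : ∀ k m, N ≤ k + m → F k m = 0 := fun k m h => by
    simp [F, Polynomial.coeff_eq_zero_of_natDegree_lt (show p.natDegree < k + m by omega)]
  calc pair (f * g) p
      = ∑ n ∈ range N, ∑ k ∈ range (n + 1), F k (n - k) := by
        refine sum_congr rfl fun n _ => ?_
        rw [coeff_mul, Nat.sum_antidiagonal_eq_sum_range_succ_mk, mul_sum]
        refine sum_congr rfl fun k hk => ?_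
        simp only [F, Nat.add_sub_cancel' (Nat.lt_succ_iff.mp (mem_range.mp hk))]
        ring
    _ = ∑ k ∈ range N, ∑ m ∈ range (N - k), F k m := sum_range_diag_flip N F
    _ = ∑ k ∈ range N, ∑ m ∈ range N, F k m := by
        refine sum_congr rfl fun k _ => sum_subset (range_subset_range.mpr (Nat.sub_le N k)) ?_
        intro m _ hm
        exact hF k m (by simp only [mem_range, not_lt] at hm; omega)
    _ = pair f (act g p) := by
        rw [pair_eq_sum_range f ((natDegree_act_le g p).trans_lt (Nat.lt_succ_self _))]
        refine sum_congr rfl fun k _ => ?_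
        rw [coeff_act, sum_mul, sum_mul]
        refine sum_congr rfl fun m _ => ?_
        simp only [F]
        rw [← Nat.factorial_mul_descFactorial (Nat.le_add_left m k), Nat.add_sub_cancel]
        push_cast
        ring

lemma Lr_eq_pair_bernoulliPowerSeries_pow (r : ℕ) (p : Polynomial ℚ) :
    Lr r p = pair (bernoulliPowerSeries ℚ ^ r) p := by
  unfold Lr pair
  refine sum_congr rfl fun m _ => ?_
  rw [coeff_pow_eq_sum_antidiagonalTuple, mul_assoc]
  congr 1
  rw [mul_sum]
  refine sum_congr rfl fun f hf => ?_
  have hm : (m.factorial : ℚ) = (∏ i, ((f i).factorial : ℚ)) * Nat.multinomial univ f := by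
    rw [← Nat.mem_antidiagonalTuple.mp hf]
    exact_mod_cast (Nat.multinomial_spec univ f).symm
  simp only [bernoulliPowerSeries, coeff_mk, Algebra.algebraMap_self, RingHom.id_apply, hm,
    prod_div_distrib]
  field_simp

theorem bernoulli_functional_r_general (r : ℕ) :
    (∀ (h : PowerSeries ℚ) (p : Polynomial ℚ),
        pair (h ^ r) p = Lr r (act ((divT (expS 1 - 1) * h) ^ r) p)) ∧
    (∀ p : Polynomial ℚ, Lr r (act ((divT (expS 1 - 1)) ^ r) p) = p.eval 0) := by
  constructor
  · intro h p
    rw [Lr_eq_pair_bernoulliPowerSeries_pow, ← pair_mul, ← mul_pow, ← mul_assoc,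
      bernoulliPowerSeries_mul_divT_exp_sub_one, one_mul]
  · intro p
    rw [Lr_eq_pair_bernoulliPowerSeries_pow, ← pair_mul, ← mul_pow,
      bernoulliPowerSeries_mul_divT_exp_sub_one, one_pow, pair_one]

/-- for any power series `h(t)`, any `r ≥ 1` and any polynomial `p`,
`⟨h(t)^r | p(x)⟩ = L^{⊗r}(((e^t-1)/t · h(t))^r p(x))`; in particular, with `h = 1`,
`L^{⊗r}(((e^t-1)/t)^r p(x)) = p(0)`. -/
theorem bernoulli_functional_r (r : ℕ) (hr : 1 ≤ r) :
    (∀ (h : PowerSeries ℚ) (p : Polynomial ℚ),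
        pair (h ^ r) p = Lr r (act ((divT (expS 1 - 1) * h) ^ r) p)) ∧
    (∀ p : Polynomial ℚ, Lr r (act ((divT (expS 1 - 1)) ^ r) p) = p.eval 0) :=
  bernoulli_functional_r_general r
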